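/- arXiv:2106.14284 — 5 statements merged into one kernel-verified Lean document; each statement's English description precedes it below -/
import Mathlib

section
/- Let M and I be observable FSMs over the same input and output alphabets, with initial states s0 and t0 respectively. Let k ∈ ℕ and let x̄1/ȳ1, x̄2/ȳ2 ∈ L(M) ∩ L(I) be IO sequences such that some set W ⊆ ΣI* r(k)-distinguishes the states s0-after-x̄1/ȳ1 and s0-after-x̄2/ȳ2 of M. If I passes the test suite {x̄1, x̄2}.W, then t0-after-x̄1/ȳ1 ≠ t0-after-x̄2/ȳ2, i.e., the two traces reach distinct states in I. -/
/-- A finite state machine over state type `S`, input alphabet `X`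
and output alphabet `Y`, given by an initial state and a transition
relation `h ⊆ S × X × Y × S`. -/
structure FSM (S X Y : Type) where
  init : S
  h : Set (S × X × Y × S)

namespace FSM

variable {S T X Y : Type}

/-- `path M s α t` holds iff the IO sequence `α` can take `M` from state `s` to state `t`. -/
def path (M : FSM S X Y) : S → List (X × Y) → S → Prop
  | s, [], t => t = s
  | s, p :: α, t => ∃ s', (s, p.1, p.2, s') ∈ M.h ∧ path M s' α t

/-- `α ∈ L_M(s)`. -/
def LangFrom (M : FSM S X Y) (s : S) (α : List (X × Y)) : Prop :=
  ∃ t, M.path s α t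

/-- `α ∈ L(M)`. -/
def Lang (M : FSM S X Y) (α : List (X × Y)) : Prop :=
  M.LangFrom M.init α

def out (M : FSM S X Y) (s : S) (x : X) : Set Y :=
  {y | ∃ s', (s, x, y, s') ∈ M.h}

/-- The set `Δ_M(s)` of inputs defined in state `s`. -/
def definedInputs (M : FSM S X Y) (s : S) : Set X :=
  {x | (M.out s x).Nonempty}

def Observable (M : FSM S X Y) : Prop :=
  ∀ s x y s₁ s₂, (s, x, y, s₁) ∈ M.h → (s, x, y, s₂) ∈ M.h → s₁ = s₂

def Deterministic (M : FSM S X Y) : Prop :=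
  ∀ s x, (M.out s x).Subsingleton

def CompletelySpecified (M : FSM S X Y) : Prop :=
  ∀ s, M.definedInputs s = Set.univ

end FSM

/-- The input portion of an IO sequence. -/
def inputs {X Y : Type} (α : List (X × Y)) : List X := α.map Prod.fst

/-- `Pref A`: the set of all prefixes of sequences in `A`. -/
def Pref {X : Type} (A : Set (List X)) : Set (List X) :=
  {p | ∃ a ∈ A, p <+: a}

/-- `A.B`: concatenation of sets of sequences, with the convention `A.∅ = A`. -/
def dotSet {X : Type} (A B : Set (List X)) : Set (List X) :=
  {c | (B = ∅ ∧ c ∈ A) ∨ ∃ a ∈ A, ∃ b ∈ B, c = a ++ b}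

namespace FSM

variable {S T X Y : Type}

/-- `I` passes the test case `xs` w.r.t. the reference model `M`
(grey-box pass relation). -/
def Passes (M : FSM S X Y) (I : FSM T X Y) (xs : List X) : Prop :=
  ∀ α : List (X × Y), inputs α <+: xs → I.Lang α →
    M.Lang α ∧
    ∀ (t : T) (s : S), I.path I.init α t → M.path M.init α s →
      I.definedInputs t = M.definedInputs s

/-- `I` passes the test suite `Ts` w.r.t. the reference model `M`. -/
def PassesSuite (M : FSM S X Y) (I : FSM T X Y) (Ts : Set (List X)) : Prop :=
  ∀ xs ∈ Ts, M.Passes I xs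

/-- `I` is a strong reduction of `M`. -/
def StrongReduction (I : FSM T X Y) (M : FSM S X Y) : Prop :=
  (∀ α, I.Lang α → M.Lang α) ∧
  ∀ α, I.Lang α → ∀ (t : T) (s : S), I.path I.init α t → M.path M.init α s →
    I.definedInputs t = M.definedInputs s

/-- `I` is a quasi-reduction of `M`. -/
def QuasiReduction (I : FSM T X Y) (M : FSM S X Y) : Prop :=
  ∀ α, I.Lang α → M.Lang α →
    ∀ (x : X) (sM : S) (tI : T), M.path M.init α sM → I.path I.init α tI →
      x ∈ M.definedInputs sM →
      x ∈ I.definedInputs tI ∧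
      ∀ y : Y, I.Lang (α ++ [(x, y)]) → M.Lang (α ++ [(x, y)])

/-- `RDist M k s₁ s₂`: states `s₁` and `s₂` are r(k)-distinguishable. -/
def RDist (M : FSM S X Y) : ℕ → S → S → Prop
  | 0, s₁, s₂ => M.definedInputs s₁ ≠ M.definedInputs s₂
  | k + 1, s₁, s₂ => RDist M k s₁ s₂ ∨
      ∃ x ∈ M.definedInputs s₁ ∩ M.definedInputs s₂,
        M.out s₁ x ∩ M.out s₂ x = ∅ ∨
        ∀ y ∈ M.out s₁ x ∩ M.out s₂ x, ∀ s₁' s₂',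
          (s₁, x, y, s₁') ∈ M.h → (s₂, x, y, s₂') ∈ M.h → RDist M k s₁' s₂'

/-- `s₁` and `s₂` are r-distinguishable. -/
def RDistinguishable (M : FSM S X Y) (s₁ s₂ : S) : Prop :=
  ∃ k, M.RDist k s₁ s₂

/-- `RDistBy M k W s₁ s₂`: the set `W` of input sequences r(k)-distinguishes `s₁` and `s₂`. -/
def RDistBy (M : FSM S X Y) : ℕ → Set (List X) → S → S → Prop
  | 0, _, s₁, s₂ => M.definedInputs s₁ ≠ M.definedInputs s₂
  | k + 1, W, s₁, s₂ => RDistBy M k W s₁ s₂ ∨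
      ∃ x, x ∈ M.definedInputs s₁ ∩ M.definedInputs s₂ ∧ [x] ∈ Pref W ∧
        ∀ y ∈ M.out s₁ x ∩ M.out s₂ x,
          ∃ W' : Set (List X), dotSet {[x]} W' ⊆ Pref W ∧
            ∀ s₁' s₂', (s₁, x, y, s₁') ∈ M.h → (s₂, x, y, s₂') ∈ M.h →
              RDistBy M k W' s₁' s₂'

/-- The set `W` r-distinguishes `s₁` and `s₂`. -/
def RDistinguishedBy (M : FSM S X Y) (W : Set (List X)) (s₁ s₂ : S) : Prop :=
  ∃ k, M.RDistBy k W s₁ s₂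

/-- The input sequence `xs` is strongly defined in `M`. -/
def StronglyDefined (M : FSM S X Y) (xs : List X) : Prop :=
  ∀ (xs₁ : List X) (x : X), xs₁ ++ [x] <+: xs →
    ∀ α : List (X × Y), inputs α = xs₁ → M.Lang α →
      ∀ t, M.path M.init α t → x ∈ M.definedInputs t

/-- The input sequence `xs` d-reaches state `s` in `M`. -/
def DReaches (M : FSM S X Y) (xs : List X) (s : S) : Prop :=
  M.StronglyDefined xs ∧
  (∃ α, inputs α = xs ∧ M.path M.init α s) ∧
  (∀ α t, inputs α = xs → M.path M.init α t → t = s)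

def DReachable (M : FSM S X Y) (s : S) : Prop :=
  ∃ xs, M.DReaches xs s

/-- A set of states that is pairwise r-distinguishable. -/
def PairwiseRDist (M : FSM S X Y) (A : Set S) : Prop :=
  ∀ s₁ ∈ A, ∀ s₂ ∈ A, s₁ ≠ s₂ → M.RDistinguishable s₁ s₂

/-- `S_D`: the set of maximal sets of pairwise r-distinguishable states of `M`. -/
def SD (M : FSM S X Y) : Set (Set S) :=
  {A | M.PairwiseRDist A ∧ ∀ B, M.PairwiseRDist B → A ⊆ B → B = A}

/-- `|Ŝ'|`: the number of d-reachable states in `A`. -/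
noncomputable def dHat (M : FSM S X Y) (A : Set S) : ℕ :=
  {t ∈ A | M.DReachable t}.ncard

open Classical in
/-- The number of nonempty prefixes of `α` that, applied to `s`, reach states of `A`. -/
noncomputable def visitCount (M : FSM S X Y) (s : S) (α : List (X × Y)) (A : Set S) : ℕ :=
  ((Finset.range α.length).filter (fun i => ∃ t ∈ A, M.path s (α.take (i + 1)) t)).card

/-- `A ∈ S_D` terminates the trace `α` for `s` and `m`. -/
def TerminatedBy (M : FSM S X Y) (m : ℕ) (s : S) (α : List (X × Y)) (A : Set S) : Prop :=
  A ∈ M.SD ∧ M.visitCount s α A = m - M.dHat A + 1 ∧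
  ∀ β : List (X × Y), β.length < α.length → β <+: α →
    ∀ B : Set S, ¬ TerminatedBy M m s β B
termination_by α.length

/-- The traversal set `Tr(s, m)`. -/
def Tr (M : FSM S X Y) (s : S) (m : ℕ) : Set (List X) :=
  Pref {xs | ∃ α, inputs α = xs ∧ M.LangFrom s α ∧ ∃ A, M.TerminatedBy m s α A}

end FSM

namespace FSM

variable {S T X Y : Type}

lemma path_unique {M : FSM S X Y} (hM : M.Observable) :
    ∀ {α : List (X × Y)} {s t₁ t₂ : S}, M.path s α t₁ → M.path s α t₂ → t₁ = t₂ := by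
  intro α
  induction α with
  | nil => intro s t₁ t₂ h1 h2; simp only [FSM.path] at h1 h2; rw [h1, h2]
  | cons p α ih =>
    intro s t₁ t₂ h1 h2
    obtain ⟨u₁, hu₁, hq₁⟩ := h1
    obtain ⟨u₂, hu₂, hq₂⟩ := h2
    cases hM s p.1 p.2 u₁ u₂ hu₁ hu₂
    exact ih hq₁ hq₂

lemma path_snoc {M : FSM S X Y} :
    ∀ {α : List (X × Y)} {s u t : S} {x : X} {y : Y},
      M.path s α u → (u, x, y, t) ∈ M.h → M.path s (α ++ [(x, y)]) t := by
  intro α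
  induction α with
  | nil =>
    intro s u t x y hp hm
    simp only [FSM.path] at hp; subst hp
    exact ⟨t, hm, rfl⟩
  | cons p α ih =>
    intro s u t x y hp hm
    obtain ⟨s', h1, h2⟩ := hp
    exact ⟨s', h1, ih h2 hm⟩

lemma path_snoc_inv {M : FSM S X Y} :
    ∀ {α : List (X × Y)} {s t : S} {x : X} {y : Y},
      M.path s (α ++ [(x, y)]) t → ∃ u, M.path s α u ∧ (u, x, y, t) ∈ M.h := by
  intro α
  induction α with
  | nil =>
    intro s t x y h
    obtain ⟨u, h1, h2⟩ := h
    simp only [FSM.path] at h2; subst h2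
    exact ⟨s, rfl, h1⟩
  | cons p α ih =>
    intro s t x y h
    obtain ⟨s', h1, h2⟩ := h
    obtain ⟨u, hu1, hu2⟩ := ih h2
    exact ⟨u, ⟨s', h1, hu1⟩, hu2⟩

lemma passes_prefix {M : FSM S X Y} {I : FSM T X Y} {xs xs' : List X}
    (hpre : xs' <+: xs) (h : M.Passes I xs) : M.Passes I xs' :=
  fun α hα hL => h α (hα.trans hpre) hL

lemma mem_dotSet_extend {A W : Set (List X)} {a : List X} (ha : a ∈ A) :
    ∃ c ∈ dotSet A W, a <+: c := by
  by_cases hW : W = ∅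
  · exact ⟨a, Or.inl ⟨hW, ha⟩, List.prefix_refl a⟩
  · obtain ⟨w, hw⟩ := Set.nonempty_iff_ne_empty.mpr hW
    exact ⟨a ++ w, Or.inr ⟨a, ha, w, hw, rfl⟩, ⟨w, rfl⟩⟩

lemma pass_defined {M : FSM S X Y} {I : FSM T X Y} {W A : Set (List X)}
    (hpass : M.PassesSuite I (dotSet A W)) {α : List (X × Y)} (ha : inputs α ∈ A)
    (hLI : I.Lang α) {t : T} {s : S} (hpt : I.path I.init α t) (hps : M.path M.init α s) :
    I.definedInputs t = M.definedInputs s := by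
  obtain ⟨c, hc, hpre⟩ := mem_dotSet_extend (W := W) ha
  exact ((hpass c hc) α hpre hLI).2 t s hpt hps

lemma pass_lang {M : FSM S X Y} {I : FSM T X Y} {W A : Set (List X)}
    (hpass : M.PassesSuite I (dotSet A W)) {α : List (X × Y)} {β : List X}
    (hpre : inputs α <+: β) (hb : β ∈ dotSet A W) (hLI : I.Lang α) : M.Lang α :=
  ((hpass β hb) α hpre hLI).1

lemma suite_step {W W' : Set (List X)} {x : X}
    (hsub : dotSet {[x]} W' ⊆ Pref W) {A A' : Set (List X)}
    (hAA : ∀ a' ∈ A', ∃ a ∈ A, a' = a ++ [x]) :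
    ∀ xs ∈ dotSet A' W', ∃ c ∈ dotSet A W, xs <+: c := by
  intro xs hxs
  cases hxs with
  | inl h =>
    obtain ⟨hW', hx⟩ := h
    obtain ⟨a, ha, rfl⟩ := hAA xs hx
    have hx1 : [x] ∈ dotSet {[x]} W' := Or.inl ⟨hW', rfl⟩
    obtain ⟨w, hw, r, hr⟩ := hsub hx1
    exact ⟨a ++ w, Or.inr ⟨a, ha, w, hw, rfl⟩, ⟨r, by rw [List.append_assoc, hr]⟩⟩
  | inr h =>
    obtain ⟨a', ha', b, hb, rfl⟩ := h
    obtain ⟨a, ha, rfl⟩ := hAA a' ha'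
    have hx1 : [x] ++ b ∈ dotSet {[x]} W' := Or.inr ⟨[x], rfl, b, hb, rfl⟩
    obtain ⟨w, hw, r, hr⟩ := hsub hx1
    refine ⟨a ++ w, Or.inr ⟨a, ha, w, hw, rfl⟩, ⟨r, ?_⟩⟩
    rw [List.append_assoc, List.append_assoc, ← List.append_assoc [x] b r, hr]

lemma inputs_snoc (α : List (X × Y)) (x : X) (y : Y) :
    inputs (α ++ [(x, y)]) = inputs α ++ [x] := by
  simp [inputs]

lemma key_lemma {M : FSM S X Y} {I : FSM T X Y} (hM : M.Observable) (hI : I.Observable) :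
    ∀ (k : ℕ) (W : Set (List X)) (α₁ α₂ : List (X × Y)) (s₁ s₂ : S),
      M.Lang α₁ → M.Lang α₂ → I.Lang α₁ → I.Lang α₂ →
      M.path M.init α₁ s₁ → M.path M.init α₂ s₂ →
      M.RDistBy k W s₁ s₂ →
      M.PassesSuite I (dotSet {inputs α₁, inputs α₂} W) →
      ∀ t₁ t₂, I.path I.init α₁ t₁ → I.path I.init α₂ t₂ → t₁ ≠ t₂ := by
  intro k
  induction k with
  | zero =>
    intro W α₁ α₂ s₁ s₂ h1M h2M h1I h2I hp₁ hp₂ hW hpass t₁ t₂ ht₁ ht₂ heq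
    subst heq
    have e1 := pass_defined hpass (Or.inl rfl) h1I ht₁ hp₁
    have e2 := pass_defined hpass (Or.inr rfl) h2I ht₂ hp₂
    exact hW (e1.symm.trans e2)
  | succ k ih =>
    intro W α₁ α₂ s₁ s₂ h1M h2M h1I h2I hp₁ hp₂ hW hpass t₁ t₂ ht₁ ht₂ heq
    cases hW with
    | inl h => exact ih W α₁ α₂ s₁ s₂ h1M h2M h1I h2I hp₁ hp₂ h hpass t₁ t₂ ht₁ ht₂ heq
    | inr h =>
      obtain ⟨x, ⟨hx1, hx2⟩, hxPref, hy⟩ := h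
      subst heq
      -- x is defined in t₁
      have e1 := pass_defined hpass (Or.inl rfl) h1I ht₁ hp₁
      have hxdef : x ∈ I.definedInputs t₁ := e1 ▸ hx1
      obtain ⟨y, t', ht'⟩ := hxdef
      -- a test from W extending [x]
      obtain ⟨w, hwW, hxw⟩ := hxPref
      have hIL1 : I.Lang (α₁ ++ [(x, y)]) := ⟨t', path_snoc ht₁ ht'⟩
      have hIL2 : I.Lang (α₂ ++ [(x, y)]) := ⟨t', path_snoc ht₂ ht'⟩
      have hmem1 : inputs α₁ ++ w ∈ dotSet {inputs α₁, inputs α₂} W :=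
        Or.inr ⟨inputs α₁, Or.inl rfl, w, hwW, rfl⟩
      have hmem2 : inputs α₂ ++ w ∈ dotSet {inputs α₁, inputs α₂} W :=
        Or.inr ⟨inputs α₂, Or.inr rfl, w, hwW, rfl⟩
      have hpre1 : inputs (α₁ ++ [(x, y)]) <+: inputs α₁ ++ w := by
        rw [inputs_snoc]
        obtain ⟨r, hr⟩ := hxw
        exact ⟨r, by rw [List.append_assoc, hr]⟩
      have hpre2 : inputs (α₂ ++ [(x, y)]) <+: inputs α₂ ++ w := by
        rw [inputs_snoc]
        obtain ⟨r, hr⟩ := hxw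
        exact ⟨r, by rw [List.append_assoc, hr]⟩
      have hML1 : M.Lang (α₁ ++ [(x, y)]) := pass_lang hpass hpre1 hmem1 hIL1
      have hML2 : M.Lang (α₂ ++ [(x, y)]) := pass_lang hpass hpre2 hmem2 hIL2
      obtain ⟨s₁'', hps1⟩ := hML1
      obtain ⟨s₂'', hps2⟩ := hML2
      obtain ⟨u₁, hu₁, hstep₁⟩ := path_snoc_inv hps1
      obtain ⟨u₂, hu₂, hstep₂⟩ := path_snoc_inv hps2
      cases path_unique hM hu₁ hp₁
      cases path_unique hM hu₂ hp₂
      have hyout : y ∈ M.out s₁ x ∩ M.out s₂ x := ⟨⟨s₁'', hstep₁⟩, ⟨s₂'', hstep₂⟩⟩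
      obtain ⟨W', hW'sub, hW'dist⟩ := hy y hyout
      have hdist := hW'dist s₁'' s₂'' hstep₁ hstep₂
      -- new pass suite
      have hpass' : M.PassesSuite I
          (dotSet {inputs (α₁ ++ [(x, y)]), inputs (α₂ ++ [(x, y)])} W') := by
        intro xs hxs
        obtain ⟨c, hc, hprec⟩ := suite_step hW'sub (A := {inputs α₁, inputs α₂})
          (fun a' ha' => by
            cases ha' with
            | inl h => exact ⟨inputs α₁, Or.inl rfl, by rw [h, inputs_snoc]⟩
            | inr h => exact ⟨inputs α₂, Or.inr rfl, by rw [h, inputs_snoc]⟩)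
          xs hxs
        exact passes_prefix hprec (hpass c hc)
      exact ih W' (α₁ ++ [(x, y)]) (α₂ ++ [(x, y)]) s₁'' s₂'' ⟨s₁'', hps1⟩ ⟨s₂'', hps2⟩
        hIL1 hIL2 hps1 hps2 hdist hpass' t' t'
        (path_snoc ht₁ ht') (path_snoc ht₂ ht') rfl

end FSM

/-- Lemma 1: if `W` r(k)-distinguishes the states of `M` reached by
`α₁` and `α₂`, and `I` passes `{x̄₁, x̄₂}.W`, then `α₁` and `α₂` reach distinct
states in `I`. -/
theorem rdist_dist {S T X Y : Type} (M : FSM S X Y) (I : FSM T X Y)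
    (hM : M.Observable) (hI : I.Observable)
    (k : ℕ) (W : Set (List X)) (α₁ α₂ : List (X × Y))
    (h₁M : M.Lang α₁) (h₂M : M.Lang α₂)
    (h₁I : I.Lang α₁) (h₂I : I.Lang α₂)
    (s₁ s₂ : S) (hp₁ : M.path M.init α₁ s₁) (hp₂ : M.path M.init α₂ s₂)
    (hW : M.RDistBy k W s₁ s₂)
    (hpass : M.PassesSuite I (dotSet {inputs α₁, inputs α₂} W)) :
    ∀ t₁ t₂ : T, I.path I.init α₁ t₁ → I.path I.init α₂ t₂ → t₁ ≠ t₂ :=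
  FSM.key_lemma hM hI k W α₁ α₂ s₁ s₂ h₁M h₂M h₁I h₂I hp₁ hp₂ hW hpass
end

section
/- For any observable FSM M, any k ∈ ℕ and any states s1, s2 of M, the following are equivalent: (1) s1 and s2 are r(k)-distinguishable; (2) there exists a set W ⊆ ΣI* that r(k)-distinguishes s1 and s2. Consequently, s1 and s2 are r-distinguishable if and only if there exists a set W ⊆ ΣI* that r-distinguishes s1 and s2. -/
/-- states are r(k)-distinguishable iff some set of input sequences
r(k)-distinguishes them; consequently they are r-distinguishable iff some set of
input sequences r-distinguishes them. -/
theorem rdist_iff_rdistBy {S X Y : Type} (M : FSM S X Y) (hM : M.Observable) :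
    (∀ (k : ℕ) (s₁ s₂ : S), M.RDist k s₁ s₂ ↔ ∃ W : Set (List X), M.RDistBy k W s₁ s₂) ∧
    (∀ s₁ s₂ : S, M.RDistinguishable s₁ s₂ ↔
      ∃ W : Set (List X), M.RDistinguishedBy W s₁ s₂) := by
  have main : ∀ (k : ℕ) (s₁ s₂ : S),
      M.RDist k s₁ s₂ ↔ ∃ W : Set (List X), M.RDistBy k W s₁ s₂ := by
    intro k
    induction k with
    | zero =>
      intro s₁ s₂
      exact ⟨fun h => ⟨∅, h⟩, fun ⟨_, h⟩ => h⟩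
    | succ k ih =>
      intro s₁ s₂
      constructor
      · rintro (h | ⟨x, hx, hcase⟩)
        · obtain ⟨W, hW⟩ := (ih s₁ s₂).1 h
          exact ⟨W, Or.inl hW⟩
        · have hy : ∀ y ∈ M.out s₁ x ∩ M.out s₂ x, ∃ W' : Set (List X),
              ∀ s₁' s₂', (s₁, x, y, s₁') ∈ M.h → (s₂, x, y, s₂') ∈ M.h →
                M.RDistBy k W' s₁' s₂' := by
            rcases hcase with hemp | hall
            · intro y hy; rw [hemp] at hy; exact absurd hy (Set.notMem_empty y)
            · intro y hyin
              obtain ⟨t₁, ht₁⟩ := hyin.1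
              obtain ⟨t₂, ht₂⟩ := hyin.2
              obtain ⟨W', hW'⟩ := (ih t₁ t₂).1 (hall y hyin t₁ t₂ ht₁ ht₂)
              refine ⟨W', fun s₁' s₂' h1 h2 => ?_⟩
              rw [hM _ _ _ _ _ h1 ht₁, hM _ _ _ _ _ h2 ht₂]
              exact hW'
          choose f hf using hy
          refine ⟨{[x]} ∪ ⋃ (y : Y) (h : y ∈ M.out s₁ x ∩ M.out s₂ x),
            dotSet {[x]} (f y h), Or.inr ⟨x, hx, ?_, ?_⟩⟩
          · exact ⟨[x], Or.inl rfl, List.prefix_refl _⟩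
          · intro y hyin
            refine ⟨f y hyin, ?_, hf y hyin⟩
            intro c hc
            refine ⟨c, Or.inr ?_, List.prefix_refl _⟩
            exact Set.mem_iUnion.2 ⟨y, Set.mem_iUnion.2 ⟨hyin, hc⟩⟩
      · rintro ⟨W, hW | ⟨x, hx, hpref, hy⟩⟩
        · exact Or.inl ((ih s₁ s₂).2 ⟨W, hW⟩)
        · refine Or.inr ⟨x, hx, Or.inr ?_⟩
          intro y hyin s₁' s₂' h1 h2
          obtain ⟨W', _, hall⟩ := hy y hyin
          exact (ih s₁' s₂').2 ⟨W', hall s₁' s₂' h1 h2⟩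
  refine ⟨main, fun s₁ s₂ => ?_⟩
  constructor
  · rintro ⟨k, hk⟩
    obtain ⟨W, hW⟩ := (main k s₁ s₂).1 hk
    exact ⟨W, k, hW⟩
  · rintro ⟨W, k, hW⟩
    exact ⟨k, (main k s₁ s₂).2 ⟨W, hW⟩⟩
end

section
/- Let M be a completely specified observable FSM and let I be an observable FSM over the same input and output alphabets that is a quasi-reduction of M. Then I is a reduction of M (i.e., L(I) ⊆ L(M)) and I is completely specified along all of its traces: Δ_I(α) = ΣI for all α ∈ L(I). -/
/-- a quasi-reduction of a completely specified observable FSM is a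
reduction of it and is completely specified along all of its traces. -/
theorem quasiReduction_of_complete {S T X Y : Type}
    (M : FSM S X Y) (I : FSM T X Y)
    (hM : M.Observable) (hI : I.Observable)
    (hMcs : M.CompletelySpecified)
    (hqr : I.QuasiReduction M) :
    (∀ α, I.Lang α → M.Lang α) ∧
    ∀ α, I.Lang α → ∀ t : T, I.path I.init α t → I.definedInputs t = Set.univ := by
  have path_append : ∀ (W : Type) (N : FSM W X Y) (α β : List (X × Y)) (s t : W),
      N.path s (α ++ β) t ↔ ∃ u, N.path s α u ∧ N.path u β t := by
    intro W N α
    induction α with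
    | nil =>
      intro β s t
      simp only [List.nil_append, FSM.path]
      constructor
      · intro h; exact ⟨s, rfl, h⟩
      · rintro ⟨u, rfl, h⟩; exact h
    | cons p α ih =>
      intro β s t
      simp only [List.cons_append, FSM.path]
      constructor
      · rintro ⟨s', hs', h⟩
        rcases (ih β s' t).mp h with ⟨u, h1, h2⟩
        exact ⟨u, ⟨s', hs', h1⟩, h2⟩
      · rintro ⟨u, ⟨s', hs', h1⟩, h2⟩
        exact ⟨s', hs', (ih β s' t).mpr ⟨u, h1, h2⟩⟩
  have hred : ∀ α, I.Lang α → M.Lang α := by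
    intro α
    induction α using List.reverseRecOn with
    | nil => intro _; exact ⟨M.init, rfl⟩
    | append_singleton α p ihα =>
      rintro ⟨t, ht⟩
      rcases (path_append T I α [p] I.init t).mp ht with ⟨u, hu, t', htr, ht'⟩
      have hIα : I.Lang α := ⟨u, hu⟩
      have hMα : M.Lang α := ihα hIα
      rcases hMα with ⟨sM, hsM⟩
      have hx : p.1 ∈ M.definedInputs sM := by
        have := hMcs sM; rw [this]; trivial
      have := (hqr α hIα ⟨sM, hsM⟩ p.1 sM u hsM hu hx).2 p.2
      apply this
      exact ⟨t, (path_append T I α [(p.1, p.2)] I.init t).mpr ⟨u, hu, t', htr, ht'⟩⟩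
  refine ⟨hred, ?_⟩
  intro α hIα t ht
  rcases hred α hIα with ⟨sM, hsM⟩
  ext x
  simp only [Set.mem_univ, iff_true]
  have hx : x ∈ M.definedInputs sM := by
    have := hMcs sM; rw [this]; trivial
  exact (hqr α hIα ⟨sM, hsM⟩ x sM t hsM ht hx).1
end

section
/- Let M be an observable FSM all of whose states are reachable, let m ≥ |M|, let s be a d-reachable state of M, and let x̄/ȳ ∈ L_M(s) be a trace such that no prefix of x̄/ȳ is terminated for s and m by any element of S_D. Then |x̄| ≤ Σ_{S' ∈ S_D} (m − |Ŝ'|). Consequently, every trace in L_M(s) of length exceeding Σ_{S' ∈ S_D} (m − |Ŝ'|) has a prefix that is terminated for s and m by some element of S_D, so the iterative extension process defining Tr(s,m) terminates. -/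
private lemma aux_path_take {S X Y : Type} (M : FSM S X Y) :
    ∀ (α : List (X × Y)) (s t : S), M.path s α t → ∀ n, ∃ u, M.path s (α.take n) u := by
  intro α
  induction α with
  | nil => intro s t _ n; exact ⟨s, by rw [List.take_nil]; rfl⟩
  | cons p α ih =>
    intro s t hp n
    cases n with
    | zero => exact ⟨s, rfl⟩
    | succ k =>
      obtain ⟨s', hstep, hrest⟩ := hp
      obtain ⟨u, hu⟩ := ih s' t hrest k
      exact ⟨u, s', hstep, hu⟩

private lemma aux_mem_SD {S X Y : Type} [Finite S] (M : FSM S X Y) (t : S) :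
    ∃ A ∈ M.SD, t ∈ A := by
  have h1 : M.PairwiseRDist {t} ∧ t ∈ ({t} : Set S) := by
    refine ⟨?_, rfl⟩
    intro s₁ h₁ s₂ h₂ hne
    simp only [Set.mem_singleton_iff] at h₁ h₂
    exact absurd (h₁.trans h₂.symm) hne
  obtain ⟨A, hle, hmax⟩ :=
    Finite.exists_le_maximal (p := fun B : Set S => M.PairwiseRDist B ∧ t ∈ B) h1
  refine ⟨A, ⟨hmax.prop.1, ?_⟩, hmax.prop.2⟩
  intro B hB hAB
  exact le_antisymm (hmax.le_of_ge ⟨hB, hAB hmax.prop.2⟩ hAB) hAB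

/-- a trace from a d-reachable state `s` none of whose prefixes is
terminated for `s` and `m` has length at most `Σ_{A ∈ S_D} (m − |Â|)`; hence any
longer trace has a terminated prefix, so the extension process defining `Tr(s,m)`
terminates. -/
theorem traversal_terminates {S X Y : Type} [Finite S]
    (M : FSM S X Y) (hM : M.Observable)
    (hreach : ∀ s : S, ∃ α, M.path M.init α s)
    (m : ℕ) (hm : Nat.card S ≤ m)
    (s : S) (hs : M.DReachable s) :
    (∀ α : List (X × Y), M.LangFrom s α →
      (∀ β, β <+: α → ∀ A : Set S, ¬ M.TerminatedBy m s β A) →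
      α.length ≤ ∑ᶠ A ∈ M.SD, (m - M.dHat A)) ∧
    (∀ α : List (X × Y), M.LangFrom s α →
      (∑ᶠ A ∈ M.SD, (m - M.dHat A)) < α.length →
      ∃ β, β <+: α ∧ ∃ A : Set S, M.TerminatedBy m s β A) := by
  classical
  have key : ∀ α : List (X × Y), M.LangFrom s α →
      (∀ β, β <+: α → ∀ A : Set S, ¬ M.TerminatedBy m s β A) →
      α.length ≤ ∑ᶠ A ∈ M.SD, (m - M.dHat A) := by
    intro α hα hterm
    set F : Set S → ℕ → Finset ℕ := fun A n =>
      (Finset.range n).filter (fun i => ∃ t ∈ A, M.path s (α.take (i + 1)) t) with hF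
    have hvc : ∀ A : Set S, ∀ n ≤ α.length, M.visitCount s (α.take n) A = (F A n).card := by
      intro A n hn
      unfold FSM.visitCount
      rw [List.length_take, Nat.min_eq_left hn, hF]
      congr 1
      apply Finset.filter_congr
      intro i hi
      rw [Finset.mem_range] at hi
      rw [List.take_take, Nat.min_eq_left (by omega)]
    have hstep : ∀ (A : Set S) (n : ℕ), (F A (n + 1)).card ≤ (F A n).card + 1 := by
      intro A n
      rw [hF]
      simp only []
      rw [Finset.range_add_one, Finset.filter_insert]
      split
      · exact (Finset.card_insert_le _ _)
      · exact Nat.le_succ _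
    have hne : ∀ n ≤ α.length, ∀ A ∈ M.SD,
        M.visitCount s (α.take n) A ≠ m - M.dHat A + 1 := by
      by_contra hcon
      push_neg at hcon
      obtain ⟨n, hn, A, hA, hvis⟩ := hcon
      have hex : ∃ k, k ≤ α.length ∧ ∃ B ∈ M.SD,
          M.visitCount s (α.take k) B = m - M.dHat B + 1 := ⟨n, hn, A, hA, hvis⟩
      obtain ⟨hk, B, hB, hvB⟩ := Nat.find_spec hex
      apply hterm (α.take (Nat.find hex)) (List.take_prefix _ α) B
      rw [FSM.TerminatedBy]
      refine ⟨hB, hvB, ?_⟩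
      intro γ hlen hpre C hC
      rw [FSM.TerminatedBy] at hC
      obtain ⟨hC1, hC2, -⟩ := hC
      have hγα : γ <+: α := hpre.trans (List.take_prefix _ α)
      have hγeq : γ = α.take γ.length := List.prefix_iff_eq_take.mp hγα
      have hlt : γ.length < Nat.find hex := by
        have : (α.take (Nat.find hex)).length = min (Nat.find hex) α.length := List.length_take
        omega
      exact Nat.find_min hex hlt ⟨hγα.length_le, C, hC1, by rwa [← hγeq]⟩
    have hbound : ∀ A ∈ M.SD, ∀ n ≤ α.length, (F A n).card ≤ m - M.dHat A := by
      intro A hA n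
      induction n with
      | zero =>
        intro _
        rw [hF]
        simp
      | succ k ih =>
        intro hk
        have h1 := ih (Nat.le_of_succ_le hk)
        have h2 := hstep A k
        have h3 := hne (k + 1) hk A hA
        rw [hvc A (k + 1) hk] at h3
        omega
    have hsub : Finset.range α.length ⊆
        ((Set.toFinite M.SD).toFinset).biUnion (fun A => F A α.length) := by
      intro i hi
      rw [Finset.mem_range] at hi
      obtain ⟨t, ht⟩ := hα
      obtain ⟨u, hu⟩ := aux_path_take M α s t ht (i + 1)
      obtain ⟨A, hA, huA⟩ := aux_mem_SD M u
      rw [Finset.mem_biUnion]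
      refine ⟨A, (Set.Finite.mem_toFinset _).2 hA, ?_⟩
      rw [hF]
      exact Finset.mem_filter.2 ⟨Finset.mem_range.2 hi, u, huA, hu⟩
    calc α.length = (Finset.range α.length).card := (Finset.card_range _).symm
      _ ≤ _ := Finset.card_le_card hsub
      _ ≤ ∑ A ∈ (Set.toFinite M.SD).toFinset, (F A α.length).card := Finset.card_biUnion_le
      _ ≤ ∑ A ∈ (Set.toFinite M.SD).toFinset, (m - M.dHat A) :=
          Finset.sum_le_sum (fun A hA =>
            hbound A ((Set.Finite.mem_toFinset _).1 hA) α.length le_rfl)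
      _ = ∑ᶠ A ∈ M.SD, (m - M.dHat A) :=
          (finsum_mem_eq_finite_toFinset_sum _ _).symm
  refine ⟨key, ?_⟩
  intro α hα hlen
  by_contra hcon
  push_neg at hcon
  have := key α hα (fun β hβ A hA => hcon β hβ A hA)
  omega
end

section
/- Let M be an observable FSM with n states, all reachable, in which the initial state s0 is the only d-reachable state and no two distinct states are r-distinguishable (so that S_D = {{s} | s ∈ S}), and let m ≥ n. Then every trace x̄/ȳ ∈ L_M(s0) none of whose prefixes is terminated for s0 and m by any element of S_D satisfies |x̄| ≤ mn − 1. Consequently, for every trace x̄/ȳ ∈ L_M(s0) with |x̄| = mn, some prefix of x̄/ȳ is terminated for s0 and m by an element of S_D. -/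
section Aux

variable {S X Y : Type}

open Classical

lemma path_take (M : FSM S X Y) : ∀ (α : List (X × Y)) (s t : S), M.path s α t →
    ∀ k, ∃ u, M.path s (α.take k) u := by
  intro α
  induction α with
  | nil => intro s t h k; exact ⟨s, by simp [FSM.path]⟩
  | cons p α ih =>
    intro s t h k
    obtain ⟨s', hs', hp⟩ := h
    cases k with
    | zero => exact ⟨s, by simp [FSM.path]⟩
    | succ k =>
      obtain ⟨u, hu⟩ := ih s' t hp k
      exact ⟨u, s', hs', hu⟩

lemma init_dreachable (M : FSM S X Y) : M.DReachable M.init := by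
  refine ⟨[], ?_, ⟨[], rfl, rfl⟩, ?_⟩
  · intro xs₁ x hpre
    simp only [List.prefix_nil] at hpre
    simp at hpre
  · intro α t hα hp
    have : α = [] := by
      simpa [inputs] using hα
    subst this
    exact hp

lemma singleton_mem_SD (M : FSM S X Y)
    (hnrd : ∀ s₁ s₂ : S, s₁ ≠ s₂ → ¬ M.RDistinguishable s₁ s₂) (s : S) :
    {s} ∈ M.SD := by
  constructor
  · intro s₁ h₁ s₂ h₂ hne
    simp only [Set.mem_singleton_iff] at h₁ h₂
    exact absurd (h₁.trans h₂.symm) hne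
  · intro B hB hsub
    apply Set.eq_of_subset_of_subset _ hsub
    intro t ht
    by_contra hts
    simp only [Set.mem_singleton_iff] at hts
    exact hnrd t s hts (hB t ht s (hsub rfl) hts)

lemma dHat_singleton (M : FSM S X Y)
    (hdr : ∀ s : S, M.DReachable s → s = M.init) (s : S) :
    M.dHat {s} = if s = M.init then 1 else 0 := by
  unfold FSM.dHat
  by_cases h : s = M.init
  · rw [if_pos h]
    have he : {t ∈ ({s} : Set S) | M.DReachable t} = {s} := by
      ext t
      simp only [Set.mem_setOf_eq, Set.mem_singleton_iff]
      exact ⟨fun ⟨a, _⟩ => a, fun ht => ⟨ht, by rw [ht, h]; exact init_dreachable M⟩⟩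
    rw [he, Set.ncard_singleton]
  · rw [if_neg h]
    have he : {t ∈ ({s} : Set S) | M.DReachable t} = ∅ := by
      ext t
      simp only [Set.mem_setOf_eq, Set.mem_singleton_iff, Set.mem_empty_iff_false,
        iff_false, not_and]
      intro ht hd
      exact h (ht ▸ hdr t hd)
    rw [he, Set.ncard_empty]

lemma counter_lemma (f : ℕ → ℕ) (h0 : f 0 = 0) (hstep : ∀ j, f (j + 1) ≤ f j + 1)
    (T : ℕ) (hT : 1 ≤ T) :
    ∀ N, (∀ j ≤ N, f j ≠ T) → f N < T := by
  intro N
  induction N with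
  | zero => intro h; omega
  | succ N ih =>
    intro h
    have h1 : f N < T := ih (fun j hj => h j (Nat.le_succ_of_le hj))
    have h2 := hstep N
    have h3 := h (N + 1) le_rfl
    omega

lemma visitCount_take (M : FSM S X Y) (s : S) (α : List (X × Y)) (A : Set S) (k : ℕ) :
    M.visitCount s (α.take k) A =
      ((Finset.range (min k α.length)).filter
        (fun i => ∃ t ∈ A, M.path s (α.take (i + 1)) t)).card := by
  unfold FSM.visitCount
  rw [List.length_take]
  apply Finset.card_bij (fun i _ => i)
  · intro i hi
    simp only [Finset.mem_filter, Finset.mem_range] at hi ⊢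
    obtain ⟨hi1, t, ht, hp⟩ := hi
    refine ⟨hi1, t, ht, ?_⟩
    rwa [List.take_take, min_eq_left (by omega)] at hp
  · intro a b _ _ h; exact h
  · intro i hi
    simp only [Finset.mem_filter, Finset.mem_range] at hi ⊢
    obtain ⟨hi1, t, ht, hp⟩ := hi
    refine ⟨i, ⟨hi1, t, ht, ?_⟩, rfl⟩
    rwa [List.take_take, min_eq_left (by omega)]

lemma filter_range_min_step (P : ℕ → Prop) [DecidablePred P] (j L : ℕ) :
    ((Finset.range (min (j + 1) L)).filter P).card ≤
      ((Finset.range (min j L)).filter P).card + 1 := by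
  calc ((Finset.range (min (j + 1) L)).filter P).card
      ≤ ((Finset.range (min j L + 1)).filter P).card := by
        apply Finset.card_le_card
        apply Finset.filter_subset_filter
        intro i hi
        simp only [Finset.mem_range] at hi ⊢
        omega
    _ ≤ ((Finset.range (min j L)).filter P).card + 1 := by
        rw [Finset.range_add_one, Finset.filter_insert]
        split
        · rw [Finset.card_insert_of_notMem (by simp)]
        · omega

end Aux

/-- worst case: if the initial state is the only d-reachable state
and no two distinct states are r-distinguishable, then unterminated traces from
the initial state have length at most `m·n − 1`, and every trace of length `m·n`
has a terminated prefix. -/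
theorem worstCase_termination {S X Y : Type} [Finite S]
    (M : FSM S X Y) (hM : M.Observable)
    (hreach : ∀ s : S, ∃ α, M.path M.init α s)
    (hdr : ∀ s : S, M.DReachable s → s = M.init)
    (hnrd : ∀ s₁ s₂ : S, s₁ ≠ s₂ → ¬ M.RDistinguishable s₁ s₂)
    (m : ℕ) (hm : Nat.card S ≤ m) :
    (∀ α : List (X × Y), M.LangFrom M.init α →
      (∀ β, β <+: α → ∀ A : Set S, ¬ M.TerminatedBy m M.init β A) →
      α.length ≤ m * Nat.card S - 1) ∧
    (∀ α : List (X × Y), M.LangFrom M.init α → α.length = m * Nat.card S →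
      ∃ β, β <+: α ∧ ∃ A : Set S, M.TerminatedBy m M.init β A) := by
    classical
  have hfin := Fintype.ofFinite S
  have hne0 : Nonempty S := ⟨M.init⟩
  have hnpos : 1 ≤ Nat.card S := Nat.card_pos (α := S)
  have main : ∀ α : List (X × Y), M.LangFrom M.init α →
      (∀ β, β <+: α → ∀ A : Set S, ¬ M.TerminatedBy m M.init β A) →
      α.length ≤ m * Nat.card S - 1 := by
    intro α hα hnt
    -- per-state bound on visits
    have key : ∀ s : S, M.visitCount M.init α ({s} : Set S) ≤ m - M.dHat {s} := by
      intro s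
      set T := m - M.dHat ({s} : Set S) + 1 with hT
      set f := fun j => M.visitCount M.init (α.take j) ({s} : Set S) with hfdef
      have h0 : f 0 = 0 := by
        simp [hfdef, FSM.visitCount]
      have hstep : ∀ j, f (j + 1) ≤ f j + 1 := by
        intro j
        simp only [hfdef]
        rw [visitCount_take, visitCount_take]
        convert filter_range_min_step
          (fun i => ∃ t ∈ ({s} : Set S), M.path M.init (α.take (i + 1)) t) j α.length
          using 3 <;> exact Finset.filter_congr_decidable _ _ _
      have hne : ∀ j ≤ α.length, f j ≠ T := by
        intro j hj hEq
        have hpre : α.take j <+: α := List.take_prefix j α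
        apply hnt (α.take j) hpre ({s} : Set S)
        rw [FSM.TerminatedBy]
        refine ⟨singleton_mem_SD M hnrd s, hEq, ?_⟩
        intro β _ hβ B
        exact hnt β (hβ.trans hpre) B
      have hT1 : 1 ≤ T := by omega
      have hlt := counter_lemma f h0 hstep T hT1 α.length hne
      have hfl : f α.length = M.visitCount M.init α ({s} : Set S) := by
        simp only [hfdef]
        rw [List.take_length]
      omega
    -- the prefixes of α cover the states
    have hcover : Finset.range α.length ⊆
        Finset.univ.biUnion (fun s : S => (Finset.range α.length).filter
          (fun i => ∃ t ∈ ({s} : Set S), M.path M.init (α.take (i + 1)) t)) := by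
      intro i hi
      obtain ⟨t, ht⟩ := hα
      obtain ⟨u, hu⟩ := path_take M α M.init t ht (i + 1)
      simp only [Finset.mem_biUnion, Finset.mem_filter]
      exact ⟨u, Finset.mem_univ u, hi, u, rfl, hu⟩
    have hlen : α.length ≤ ∑ s : S, M.visitCount M.init α ({s} : Set S) := by
      calc α.length = (Finset.range α.length).card := by rw [Finset.card_range]
        _ ≤ (Finset.univ.biUnion (fun s : S => (Finset.range α.length).filter
              (fun i => ∃ t ∈ ({s} : Set S), M.path M.init (α.take (i + 1)) t))).card :=
            Finset.card_le_card hcover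
        _ ≤ ∑ s : S, ((Finset.range α.length).filter
              (fun i => ∃ t ∈ ({s} : Set S), M.path M.init (α.take (i + 1)) t)).card :=
            Finset.card_biUnion_le
        _ = ∑ s : S, M.visitCount M.init α ({s} : Set S) := by
            apply Finset.sum_congr rfl
            intro s _
            unfold FSM.visitCount
            congr
    have hsum : ∑ s : S, M.visitCount M.init α ({s} : Set S) ≤
        ∑ s : S, (if s = M.init then m - 1 else m) := by
      apply Finset.sum_le_sum
      intro s _
      have h1 := key s
      rw [dHat_singleton M hdr s] at h1
      split
      · rename_i h; rw [if_pos h] at h1; exact h1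
      · rename_i h; rw [if_neg h] at h1; simpa using h1
    have hcard : (Finset.univ.erase M.init).card = Nat.card S - 1 := by
      rw [Finset.card_erase_of_mem (Finset.mem_univ _), Nat.card_eq_fintype_card,
        Finset.card_univ]
    have hsum2 : ∑ s : S, (if s = M.init then m - 1 else m)
        = (m - 1) + (Nat.card S - 1) * m := by
      rw [← Finset.add_sum_erase Finset.univ _ (Finset.mem_univ M.init), if_pos rfl]
      congr 1
      rw [Finset.sum_congr rfl (fun s hs => if_neg (Finset.ne_of_mem_erase hs)),
        Finset.sum_const, hcard, smul_eq_mul]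
    have hmn : 1 ≤ m := le_trans hnpos hm
    have h5 : α.length ≤ (m - 1) + (Nat.card S - 1) * m :=
      hlen.trans (hsum.trans hsum2.le)
    obtain ⟨n', hn'⟩ : ∃ n', Nat.card S = n' + 1 := ⟨Nat.card S - 1, by omega⟩
    obtain ⟨m', hm'⟩ : ∃ m', m = m' + 1 := ⟨m - 1, by omega⟩
    rw [hn', hm'] at h5 ⊢
    simp only [Nat.add_sub_cancel] at h5 ⊢
    rw [show n' * (m' + 1) = m' * n' + n' from by ring] at h5
    rw [show (m' + 1) * (n' + 1) = m' * n' + m' + n' + 1 from by ring]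
    generalize m' * n' = K at h5 ⊢
    omega
  constructor
  · exact main
  · intro α hα hlen
    by_contra hcon
    push_neg at hcon
    have := main α hα (fun β hβ A hA => hcon β hβ A hA)
    have hmn : 1 ≤ m := le_trans hnpos hm
    have : 1 ≤ m * Nat.card S := Nat.one_le_iff_ne_zero.mpr (by positivity)
    omega
end
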